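/- arXiv:1609.07301 — 4 statements merged into one kernel-verified Lean document; each statement's English description precedes it below -/
import Mathlib

section
/- For every natural number p and every real number z with |z| < 1, ∑_{n=0}^∞ c(n+1,p+1)·z^n/n! = (-log(1-z))^p / (p! · (1-z)). -/
/-- Unsigned Stirling numbers of the first kind. -/
def stirling1 : ℕ → ℕ → ℕ
  | 0, 0 => 1
  | 0, _ + 1 => 0
  | _ + 1, 0 => 0
  | n + 1, k + 1 => n * stirling1 n (k + 1) + stirling1 n k

/-- Stirling numbers of the second kind. -/
def stirling2 : ℕ → ℕ → ℕ
  | 0, 0 => 1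
  | 0, _ + 1 => 0
  | _ + 1, 0 => 0
  | n + 1, k + 1 => (k + 1) * stirling2 n (k + 1) + stirling2 n k

/-- First-order Eulerian numbers. -/
def eulerian : ℕ → ℕ → ℕ
  | 0, 0 => 1
  | 0, _ + 1 => 0
  | n + 1, 0 => eulerian n 0
  | n + 1, m + 1 => (m + 2) * eulerian n (m + 1) + (n - m) * eulerian n m

/-- Second-order Eulerian numbers. -/
def eulerian2 : ℕ → ℕ → ℕ
  | 0, 0 => 1
  | 0, _ + 1 => 0
  | n + 1, 0 => eulerian2 n 0
  | n + 1, m + 1 => (m + 2) * eulerian2 n (m + 1) + (2 * n - m) * eulerian2 n m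


/-! By induction on `p`, the exponential generating function of `c(·, p)` is
`(-log (1 - z)) ^ p / p!`. The recurrence gives `c(n+1, p+1) / n! = ∑_{k ≤ n} c(k, p) / k!`, so the
shifted series is the Cauchy product of that generating function with the geometric series,
`(-log (1 - z)) ^ p / (p! (1 - z))`. Integrating it termwise from `0` to `z` returns the generating
function of `c(·, p+1)`, and `(-log (1 - z)) ^ (p + 1) / (p + 1)!` is an antiderivative. -/

open Finset Real Set MeasureTheory
open scoped Nat

lemma stirling1_succ_zero (n : ℕ) : stirling1 (n + 1) 0 = 0 := rfl

lemma stirling1_zero_succ (k : ℕ) : stirling1 0 (k + 1) = 0 := rfl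

lemma stirling1_succ_succ (n k : ℕ) :
    stirling1 (n + 1) (k + 1) = n * stirling1 n (k + 1) + stirling1 n k := rfl

theorem stirling1_succ_succ_div_factorial (n p : ℕ) :
    (stirling1 (n + 1) (p + 1) : ℝ) / n ! = ∑ k ∈ range (n + 1), (stirling1 k p : ℝ) / k ! := by
  induction n with
  | zero => simp [stirling1_succ_succ]
  | succ n ih =>
    rw [sum_range_succ, ← ih, stirling1_succ_succ, Nat.factorial_succ]
    push_cast
    field_simp

theorem HasSum.sum_range_mul_geometric {𝕜 : Type*} [NormedField 𝕜] [CompleteSpace 𝕜]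
    {a : ℕ → 𝕜} {z A : 𝕜} (hz : ‖z‖ < 1) (ha : Summable fun n => ‖a n * z ^ n‖)
    (hA : HasSum (fun n => a n * z ^ n) A) :
    HasSum (fun n => (∑ k ∈ range (n + 1), a k) * z ^ n) (A * (1 - z)⁻¹) := by
  have hprod := hasSum_sum_range_mul_of_summable_norm ha
    (summable_norm_geometric_of_norm_lt_one hz)
  rw [hA.tsum_eq, (hasSum_geometric_of_norm_lt_one hz).tsum_eq] at hprod
  convert hprod using 2 with n
  rw [sum_mul]
  refine sum_congr rfl fun k hk => ?_
  rw [mul_assoc, ← pow_add, Nat.add_sub_cancel' (Nat.lt_succ_iff.mp (mem_range.mp hk))]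

lemma abs_le_abs_of_mem_uIcc_zero {x z : ℝ} (hx : x ∈ uIcc 0 z) : |x| ≤ |z| := by
  simpa using abs_sub_left_of_mem_uIcc hx

theorem hasSum_intervalIntegral_of_hasSum_pow {a : ℕ → ℝ} {f : ℝ → ℝ} {z : ℝ}
    (ha : Summable fun n => |a n| * |z| ^ n)
    (hf : ∀ x ∈ uIcc 0 z, HasSum (fun n => a n * x ^ n) (f x)) :
    HasSum (fun n => a n * z ^ (n + 1) / (n + 1)) (∫ x in 0..z, f x) := by
  have hterm (n : ℕ) : ∫ x in 0..z, a n * x ^ n = a n * z ^ (n + 1) / (n + 1) := by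
    simp [integral_pow, mul_div_assoc]
  simp only [← hterm]
  refine intervalIntegral.hasSum_integral_of_dominated_convergence (fun n _ => |a n| * |z| ^ n)
    (fun n => (continuous_const.mul (continuous_pow n)).aestronglyMeasurable)
    (fun n => ae_of_all _ fun x hx => ?_) (ae_of_all _ fun _ _ => ha) intervalIntegrable_const
    (ae_of_all _ fun x hx => hf x (uIoc_subset_uIcc hx))
  have hxz := abs_le_abs_of_mem_uIcc_zero (uIoc_subset_uIcc hx)
  rw [norm_mul, norm_pow, Real.norm_eq_abs, Real.norm_eq_abs]
  gcongr

theorem hasDerivAt_neg_log_one_sub_pow_div_factorial (p : ℕ) {x : ℝ} (hx : x < 1) :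
    HasDerivAt (fun y => (-log (1 - y)) ^ (p + 1) / (p + 1)!)
      ((-log (1 - x)) ^ p / (p ! * (1 - x))) x := by
  have hL : HasDerivAt (fun y => -log (1 - y)) (1 - x)⁻¹ x := by
    refine (((hasDerivAt_id x).const_sub 1).log (sub_ne_zero.mpr hx.ne')).neg.congr_deriv ?_
    rw [neg_div, neg_neg, one_div, id]
  refine ((hL.pow (p + 1)).div_const ((p + 1)! : ℝ)).congr_deriv ?_
  rw [Nat.factorial_succ, Nat.add_sub_cancel]
  push_cast
  field_simp

theorem integral_neg_log_one_sub_pow_div (p : ℕ) {z : ℝ} (hz : z < 1) :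
    ∫ x in 0..z, (-log (1 - x)) ^ p / (p ! * (1 - x)) = (-log (1 - z)) ^ (p + 1) / (p + 1)! := by
  have hlt : ∀ x ∈ uIcc 0 z, x < 1 := fun x hx => hx.2.trans_lt (max_lt one_pos hz)
  rw [intervalIntegral.integral_eq_sub_of_hasDerivAt
    (fun x hx => hasDerivAt_neg_log_one_sub_pow_div_factorial p (hlt x hx))]
  · simp
  refine ContinuousOn.intervalIntegrable fun x hx => ContinuousAt.continuousWithinAt ?_
  have h1x : 1 - x ≠ 0 := sub_ne_zero.mpr (hlt x hx).ne'
  fun_prop (disch := positivity)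

theorem hasSum_stirling1_succ_succ_of_hasSum {p : ℕ} {F : ℝ → ℝ}
    (hF : ∀ x, |x| < 1 → HasSum (fun n => (stirling1 n p : ℝ) * x ^ n / n !) (F x))
    {z : ℝ} (hz : |z| < 1) :
    HasSum (fun n => (stirling1 (n + 1) (p + 1) : ℝ) * z ^ n / n !) (F z / (1 - z)) := by
  have hcoeff (x : ℝ) (n : ℕ) :
      (stirling1 n p : ℝ) / n ! * x ^ n = (stirling1 n p : ℝ) * x ^ n / n ! :=
    div_mul_eq_mul_div _ _ _
  have habs : Summable fun n => ‖(stirling1 n p : ℝ) / n ! * z ^ n‖ := by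
    refine (hF |z| (by rwa [abs_abs])).summable.congr fun n => ?_
    simp only [hcoeff, norm_div, norm_mul, norm_pow, Real.norm_eq_abs, Nat.abs_cast]
  have hsum := ((hF z hz).congr_fun (hcoeff z)).sum_range_mul_geometric
    (by rwa [Real.norm_eq_abs]) habs
  simpa only [← stirling1_succ_succ_div_factorial, div_mul_eq_mul_div, ← div_eq_mul_inv] using hsum

theorem hasSum_stirling1_of_hasSum_succ_succ {p : ℕ} {F : ℝ → ℝ} {z : ℝ}
    (hF : ∀ x ∈ uIcc 0 z,
      HasSum (fun n => (stirling1 (n + 1) (p + 1) : ℝ) * x ^ n / n !) (F x))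
    (hs : Summable fun n => (stirling1 (n + 1) (p + 1) : ℝ) * |z| ^ n / n !) :
    HasSum (fun n => (stirling1 n (p + 1) : ℝ) * z ^ n / n !) (∫ x in 0..z, F x) := by
  have hcoeff (x : ℝ) (n : ℕ) : (stirling1 (n + 1) (p + 1) : ℝ) / n ! * x ^ n
      = (stirling1 (n + 1) (p + 1) : ℝ) * x ^ n / n ! := div_mul_eq_mul_div _ _ _
  have hint := hasSum_intervalIntegral_of_hasSum_pow
    (hs.congr fun n => by rw [abs_div, Nat.abs_cast, Nat.abs_cast, hcoeff])
    (fun x hx => (hF x hx).congr_fun (hcoeff x))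
  refine (hasSum_nat_add_iff' 1).mp ?_
  simp only [range_one, sum_singleton, stirling1_zero_succ, Nat.cast_zero, zero_mul, zero_div,
    sub_zero]
  refine hint.congr_fun fun n => ?_
  rw [Nat.factorial_succ]
  push_cast
  field_simp

theorem hasSum_stirling1 (p : ℕ) {z : ℝ} (hz : |z| < 1) :
    HasSum (fun n => (stirling1 n p : ℝ) * z ^ n / n !) ((-log (1 - z)) ^ p / p !) := by
  induction p generalizing z with
  | zero =>
    have hvanish (n : ℕ) (hn : n ≠ 0) : (stirling1 n 0 : ℝ) * z ^ n / n ! = 0 := by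
      obtain ⟨m, rfl⟩ := Nat.exists_eq_succ_of_ne_zero hn
      simp [stirling1_succ_zero]
    simpa [stirling1] using hasSum_single 0 hvanish
  | succ p ih =>
    have hshift (x : ℝ) (hx : |x| < 1) := hasSum_stirling1_succ_succ_of_hasSum (fun _ => ih) hx
    rw [← integral_neg_log_one_sub_pow_div p ((le_abs_self z).trans_lt hz)]
    refine hasSum_stirling1_of_hasSum_succ_succ (fun x hx => ?_)
      (hshift |z| (by rwa [abs_abs])).summable
    simpa only [div_div] using hshift x ((abs_le_abs_of_mem_uIcc_zero hx).trans_lt hz)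

theorem egf_stirling1_shifted (p : ℕ) (z : ℝ) (hz : |z| < 1) :
    HasSum (fun n : ℕ => (stirling1 (n + 1) (p + 1) : ℝ) * z ^ n / (n.factorial : ℝ))
      ((-Real.log (1 - z)) ^ p / ((p.factorial : ℝ) * (1 - z))) := by
  simpa only [div_div] using hasSum_stirling1_succ_succ_of_hasSum (fun _ => hasSum_stirling1 p) hz
end

section
/- For all natural numbers k, p and every real z with |z| < 1, ∑_{n=0}^∞ n^k · c(n,p) · z^n/n! = ∑_{j=0}^{k} S(k,j) · z^j · D^{(j)}[ x ↦ (-1)^p (log(1-x))^p / p! ](z), where D^{(j)} denotes the j-th derivative with respect to the variable, evaluated at z. -/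
/-!
Write `f_p x = (-log (1 - x)) ^ p / p!`. The recurrence for `c(n, p)` says that the power
series `F_p x = ∑ c(n, p) xⁿ / n!` satisfies `(1 - x) F_{p+1}' = F_p`, which is also the
differential equation of `f_{p+1}`; as both vanish at `0`, `F_p = f_p` on `|x| < 1`.
Differentiating `F_p` termwise `j` times gives `z ^ j f_p⁽ʲ⁾ z = ∑ n⁽ʲ⁾ c(n, p) zⁿ / n!`, where
`n⁽ʲ⁾ = n (n - 1) ⋯ (n - j + 1)` is the falling factorial, and `nᵏ = ∑ⱼ S(k, j) n⁽ʲ⁾`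
assembles these into the claim.
-/

open Finset Metric Filter Topology

-- For `n < j` both sides vanish, so the truncated subtraction `n - j` is harmless.
theorem descFactorial_mul_pow_sub_mul_pow {R : Type*} [Semiring R] (n j : ℕ) (x : R) :
    (n.descFactorial j : R) * x ^ (n - j) * x ^ j = n.descFactorial j * x ^ n := by
  rcases le_or_gt j n with h | h
  · rw [mul_assoc, ← pow_add, Nat.sub_add_cancel h]
  · simp [Nat.descFactorial_eq_zero_iff_lt.mpr h]

theorem summable_descFactorial_mul_pow_sub {R : Type*} [NormedRing R] [HasSummableGeomSeries R]
    (j : ℕ) {r : R} (hr : ‖r‖ < 1) :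
    Summable fun n : ℕ => (n.descFactorial j : R) * r ^ (n - j) := by
  rw [← summable_nat_add_iff j]
  simpa using summable_descFactorial_mul_geometric_of_norm_lt_one j hr

section PowerSeries

variable {𝕜 : Type*} [RCLike 𝕜] {a : ℕ → 𝕜} {C : ℝ}

theorem summable_mul_descFactorial_mul_pow_sub (ha : ∀ n, ‖a n‖ ≤ C) (j : ℕ) {z : 𝕜}
    (hz : ‖z‖ < 1) : Summable fun n => a n * n.descFactorial j * z ^ (n - j) := by
  refine .of_norm_bounded
    ((summable_descFactorial_mul_pow_sub j (r := ‖z‖) (by simpa using hz)).mul_left C)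
    fun n => ?_
  rw [norm_mul, norm_mul, norm_pow, RCLike.norm_natCast, mul_assoc]
  exact mul_le_mul_of_nonneg_right (ha n) (by positivity)

theorem hasDerivAt_tsum_mul_descFactorial_mul_pow_sub (ha : ∀ n, ‖a n‖ ≤ C) (j : ℕ) {z : 𝕜}
    (hz : ‖z‖ < 1) :
    HasDerivAt (fun x => ∑' n, a n * n.descFactorial j * x ^ (n - j))
      (∑' n, a n * n.descFactorial (j + 1) * z ^ (n - (j + 1))) z := by
  obtain ⟨r, hzr, hr⟩ := exists_between hz
  have hr0 : 0 ≤ r := (norm_nonneg z).trans hzr.le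
  have hC : 0 ≤ C := (norm_nonneg _).trans (ha 0)
  have hz' : z ∈ ball (0 : 𝕜) r := mem_ball_zero_iff.2 hzr
  have hu : Summable fun n : ℕ => C * ((n.descFactorial (j + 1) : ℝ) * r ^ (n - (j + 1))) :=
    (summable_descFactorial_mul_pow_sub (j + 1) (by rwa [Real.norm_of_nonneg hr0])).mul_left C
  refine hasDerivAt_tsum_of_isPreconnected hu isOpen_ball
    (convex_ball (0 : 𝕜) r).isPreconnected
    (g' := fun n y => a n * n.descFactorial (j + 1) * y ^ (n - (j + 1)))
    (fun n y _ => ?_) (fun n y hy => ?_) hz'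
    (summable_mul_descFactorial_mul_pow_sub ha j hz) hz'
  · refine ((hasDerivAt_pow (n - j) y).const_mul (a n * n.descFactorial j)).congr_deriv ?_
    rw [Nat.descFactorial_succ, Nat.sub_sub]
    push_cast
    ring
  · have hy : ‖y‖ ≤ r := (mem_ball_zero_iff.1 hy).le
    rw [norm_mul, norm_mul, norm_pow, RCLike.norm_natCast, mul_assoc]
    exact mul_le_mul (ha n) (by gcongr) (by positivity) hC

theorem iteratedDeriv_tsum_mul_pow_eqOn (ha : ∀ n, ‖a n‖ ≤ C) (j : ℕ) :
    Set.EqOn (iteratedDeriv j fun x => ∑' n, a n * x ^ n)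
      (fun x => ∑' n, a n * n.descFactorial j * x ^ (n - j)) (ball 0 1) := by
  induction j with
  | zero => intro x _; simp
  | succ j ih =>
    intro x hx
    rw [iteratedDeriv_succ]
    exact ((hasDerivAt_tsum_mul_descFactorial_mul_pow_sub ha j (mem_ball_zero_iff.1 hx))
      |>.congr_of_eventuallyEq (ih.eventuallyEq_of_mem (isOpen_ball.mem_nhds hx))).deriv

theorem hasSum_mul_descFactorial_mul_pow (ha : ∀ n, ‖a n‖ ≤ C) {f : 𝕜 → 𝕜}
    (hf : ∀ x, ‖x‖ < 1 → HasSum (fun n => a n * x ^ n) (f x)) (j : ℕ) {z : 𝕜} (hz : ‖z‖ < 1) :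
    HasSum (fun n => a n * n.descFactorial j * z ^ n) (z ^ j * iteratedDeriv j f z) := by
  have hz' : z ∈ ball (0 : 𝕜) 1 := mem_ball_zero_iff.2 hz
  have hfF : f =ᶠ[𝓝 z] fun x => ∑' n, a n * x ^ n :=
    eventually_of_mem (isOpen_ball.mem_nhds hz') fun x hx =>
      (hf x (mem_ball_zero_iff.1 hx)).tsum_eq.symm
  rw [hfF.iteratedDeriv_eq, iteratedDeriv_tsum_mul_pow_eqOn ha j hz', mul_comm]
  refine ((summable_mul_descFactorial_mul_pow_sub ha j hz).hasSum.mul_right (z ^ j)).congr_fun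
    fun n => ?_
  rw [mul_assoc, mul_assoc, mul_assoc, ← mul_assoc _ (z ^ _), descFactorial_mul_pow_sub_mul_pow]

end PowerSeries

theorem stirling2_eq_zero_of_lt : ∀ {n k : ℕ}, n < k → stirling2 n k = 0
  | _, 0, h => absurd h (Nat.not_lt_zero _)
  | 0, _ + 1, _ => rfl
  | n + 1, k + 1, h => by
    rw [stirling2, stirling2_eq_zero_of_lt (Nat.lt_of_succ_lt_succ h),
      stirling2_eq_zero_of_lt (Nat.lt_of_succ_lt h), mul_zero]

theorem Nat.descFactorial_mul_eq_descFactorial_succ_add (n j : ℕ) :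
    n.descFactorial j * n = n.descFactorial (j + 1) + j * n.descFactorial j := by
  rcases le_or_gt j n with h | h
  · rw [Nat.descFactorial_succ, ← Nat.add_mul, Nat.sub_add_cancel h, mul_comm]
  · simp [Nat.descFactorial_eq_zero_iff_lt.mpr h]

theorem sum_stirling2_mul_descFactorial (k n : ℕ) :
    ∑ j ∈ range (k + 1), stirling2 k j * n.descFactorial j = n ^ k := by
  induction k with
  | zero => simp [stirling2]
  | succ k ih =>
    have hshift : ∑ j ∈ range (k + 1), j * stirling2 k j * n.descFactorial j =
        ∑ j ∈ range (k + 1), (j + 1) * stirling2 k (j + 1) * n.descFactorial (j + 1) := by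
      rw [sum_range_succ', sum_range_succ, stirling2_eq_zero_of_lt (Nat.lt_succ_self k)]
      simp
    calc ∑ j ∈ range (k + 2), stirling2 (k + 1) j * n.descFactorial j
        = ∑ j ∈ range (k + 1), ((j + 1) * stirling2 k (j + 1) * n.descFactorial (j + 1) +
            stirling2 k j * n.descFactorial (j + 1)) := by
          rw [sum_range_succ']
          simp only [stirling2, add_mul]
          simp
      _ = ∑ j ∈ range (k + 1), stirling2 k j * (n.descFactorial j * n) := by
          simp only [Nat.descFactorial_mul_eq_descFactorial_succ_add, mul_add, sum_add_distrib,
            ← hshift]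
          rw [add_comm]
          congr 1
          exact sum_congr rfl fun j _ => by ring
      _ = n ^ (k + 1) := by rw [pow_succ, ← ih, sum_mul]; simp only [mul_assoc]

theorem stirling1_le_factorial : ∀ n p, stirling1 n p ≤ n.factorial
  | 0, 0 => le_rfl
  | 0, _ + 1 => Nat.zero_le _
  | _ + 1, 0 => Nat.zero_le _
  | n + 1, p + 1 => by
    have h₁ := stirling1_le_factorial n (p + 1)
    have h₂ := stirling1_le_factorial n p
    rw [stirling1, Nat.factorial_succ, Nat.succ_mul]
    gcongr

theorem norm_stirling1_div_factorial_le_one (n p : ℕ) :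
    ‖(stirling1 n p : ℝ) / n.factorial‖ ≤ 1 := by
  rw [Real.norm_of_nonneg (by positivity), div_le_one (by positivity)]
  exact_mod_cast stirling1_le_factorial n p

noncomputable def stirling1EGF (p : ℕ) (x : ℝ) : ℝ :=
  ∑' n, (stirling1 n p : ℝ) / n.factorial * x ^ n

theorem hasSum_stirling1EGF (p : ℕ) {x : ℝ} (hx : |x| < 1) :
    HasSum (fun n => (stirling1 n p : ℝ) / n.factorial * x ^ n) (stirling1EGF p x) := by
  simpa [stirling1EGF] using (summable_mul_descFactorial_mul_pow_sub
    (norm_stirling1_div_factorial_le_one · p) 0 (by rwa [Real.norm_eq_abs])).hasSum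

theorem hasDerivAt_stirling1EGF_succ (p : ℕ) {x : ℝ} (hx : |x| < 1) :
    HasDerivAt (stirling1EGF (p + 1)) ((1 - x)⁻¹ * stirling1EGF p x) x := by
  set b : ℕ → ℝ := fun n => (stirling1 n (p + 1) : ℝ) / n.factorial
  have hx' : ‖x‖ < 1 := by rwa [Real.norm_eq_abs]
  have hD := hasDerivAt_tsum_mul_descFactorial_mul_pow_sub
    (norm_stirling1_div_factorial_le_one · (p + 1)) 0 hx'
  simp only [Nat.descFactorial_zero, Nat.cast_one, mul_one, Nat.sub_zero, zero_add,
    Nat.descFactorial_one] at hD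
  set D := ∑' n, b n * n * x ^ (n - 1)
  have hsum : HasSum (fun n => b n * n * x ^ (n - 1)) D := by
    simpa using (summable_mul_descFactorial_mul_pow_sub
      (norm_stirling1_div_factorial_le_one · (p + 1)) 1 hx').hasSum
  have hshift : HasSum (fun n => b (n + 1) * (n + 1 : ℕ) * x ^ n) D := by
    simpa using (hasSum_nat_add_iff' 1).2 hsum
  have hxD : HasSum (fun n => b n * n * x ^ n) (x * D) := by
    refine (hsum.mul_left x).congr_fun fun n => ?_
    have := descFactorial_mul_pow_sub_mul_pow n 1 x
    rw [Nat.descFactorial_one] at this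
    linear_combination (-b n) * this
  -- `D` is the derivative, and `c(n + 1, p + 1) = n c(n, p + 1) + c(n, p)` reads `D = x D + F_p`.
  have hrec : D = x * D + stirling1EGF p x := by
    refine hshift.unique ((hxD.add (hasSum_stirling1EGF p hx)).congr_fun fun n => ?_)
    simp only [b, stirling1, Nat.factorial_succ]
    push_cast
    field_simp
  rw [show (1 - x)⁻¹ * stirling1EGF p x = D by
    field_simp [show 1 - x ≠ 0 by linarith [le_abs_self x]]; linarith]
  exact hD

theorem hasDerivAt_neg_one_pow_mul_log_one_sub_pow_div_factorial (p : ℕ) {x : ℝ} (hx : x < 1) :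
    HasDerivAt (fun y => (-1) ^ (p + 1) * Real.log (1 - y) ^ (p + 1) / (p + 1).factorial)
      ((1 - x)⁻¹ * ((-1) ^ p * Real.log (1 - x) ^ p / p.factorial)) x := by
  have hlog : HasDerivAt (fun y => Real.log (1 - y)) (-(1 - x)⁻¹) x := by
    simpa [div_eq_inv_mul] using ((hasDerivAt_id x).const_sub 1).log (sub_pos.2 hx).ne'
  refine ((hlog.pow (p + 1)).const_mul _ |>.div_const _).congr_deriv ?_
  rw [Nat.factorial_succ, Nat.add_sub_cancel]
  push_cast
  field_simp
  ring

theorem stirling1EGF_eqOn (p : ℕ) :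
    Set.EqOn (stirling1EGF p) (fun x => (-1) ^ p * Real.log (1 - x) ^ p / p.factorial)
      (ball 0 1) := by
  induction p with
  | zero =>
    intro x _
    rw [stirling1EGF, tsum_eq_single 0 fun n hn => ?_]
    · simp [stirling1]
    · obtain ⟨m, rfl⟩ := Nat.exists_eq_succ_of_ne_zero hn
      simp [stirling1]
  | succ p ih =>
    have hderiv : ∀ x ∈ ball (0 : ℝ) 1, HasDerivAt (stirling1EGF (p + 1))
        ((1 - x)⁻¹ * ((-1) ^ p * Real.log (1 - x) ^ p / p.factorial)) x := fun x hx => by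
      have h := hasDerivAt_stirling1EGF_succ p (x := x) (by simpa using hx)
      rwa [ih hx] at h
    have hderiv' : ∀ x ∈ ball (0 : ℝ) 1, HasDerivAt
        (fun y => (-1) ^ (p + 1) * Real.log (1 - y) ^ (p + 1) / (p + 1).factorial)
        ((1 - x)⁻¹ * ((-1) ^ p * Real.log (1 - x) ^ p / p.factorial)) x := fun x hx =>
      hasDerivAt_neg_one_pow_mul_log_one_sub_pow_div_factorial p
        (lt_of_abs_lt (by simpa using hx))
    refine isOpen_ball.eqOn_of_deriv_eq (convex_ball 0 1).isPreconnected
      (fun x hx => (hderiv x hx).differentiableAt.differentiableWithinAt)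
      (fun x hx => (hderiv' x hx).differentiableAt.differentiableWithinAt)
      (fun x hx => (hderiv x hx).deriv.trans (hderiv' x hx).deriv.symm)
      (mem_ball_self one_pos) ?_
    rw [stirling1EGF, tsum_eq_single 0 fun n hn => by simp [hn]]
    simp [stirling1]

theorem hasSum_stirling1_div_factorial_mul_pow (p : ℕ) {x : ℝ} (hx : |x| < 1) :
    HasSum (fun n => (stirling1 n p : ℝ) / n.factorial * x ^ n)
      ((-1) ^ p * Real.log (1 - x) ^ p / p.factorial) := by
  have h := hasSum_stirling1EGF p hx
  rwa [stirling1EGF_eqOn p (by simpa using hx)] at h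

theorem modified_egf_stirling1 (k p : ℕ) (z : ℝ) (hz : |z| < 1) :
    HasSum (fun n : ℕ => (n : ℝ) ^ k * (stirling1 n p : ℝ) * z ^ n / (n.factorial : ℝ))
      (∑ j ∈ Finset.range (k + 1),
        (stirling2 k j : ℝ) * z ^ j *
          iteratedDeriv j
            (fun x : ℝ => (-1 : ℝ) ^ p * Real.log (1 - x) ^ p / (p.factorial : ℝ)) z) := by
  have hj : ∀ j ∈ range (k + 1), HasSum
      (fun n => (stirling2 k j : ℝ) *
        ((stirling1 n p : ℝ) / n.factorial * n.descFactorial j * z ^ n))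
      (stirling2 k j * (z ^ j * iteratedDeriv j
        (fun x : ℝ => (-1 : ℝ) ^ p * Real.log (1 - x) ^ p / (p.factorial : ℝ)) z)) :=
    fun j _ => (hasSum_mul_descFactorial_mul_pow (norm_stirling1_div_factorial_le_one · p)
      (fun x hx => hasSum_stirling1_div_factorial_mul_pow p (by rwa [← Real.norm_eq_abs]))
      j (by rwa [Real.norm_eq_abs])).mul_left _
  convert hasSum_sum hj using 1
  · funext n
    have h : (n : ℝ) ^ k = ∑ j ∈ range (k + 1), (stirling2 k j : ℝ) * n.descFactorial j := by
      exact_mod_cast (sum_stirling2_mul_descFactorial k n).symm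
    rw [h, sum_mul, sum_mul, sum_div]
    exact sum_congr rfl fun j _ => by ring
  · exact sum_congr rfl fun j _ => by ring
end

section
/- For all natural numbers j, p and every real z with z < 1, the j-th derivative of the function x ↦ (-1)^p (log(1-x))^p / (p!·(1-x)) at z equals ∑_{i=max(0,j-p)}^{j} c(j+1, j+1-i) · ((-1)^{p+j-i}/(1-z)^{j+1}) · (log(1-z))^{p-j+i} / (p-j+i)!. -/
/-! With `u x = -log (1 - x)` we have `u' = 1 / (1 - x)`, so
`(u ^ m / m!)' = u ^ (m - 1) / (m - 1)! / (1 - x)`. Hence every derivative of `u ^ p / p! / (1 - x)`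
has the shape `P_j / (1 - x) ^ (j + 1)` with `P_j = ∑ₖ c(j + 1, k + 1) u ^ (p - k) / (p - k)!`:
differentiating this quotient produces exactly the recurrence
`c(j + 2, k + 1) = (j + 1) c(j + 1, k + 1) + c(j + 1, k)`. The signs `(-1) ^ (p + j - i)` of the
statement are the signs absorbed into `u`. -/

open Finset

lemma stirling1_eq_zero_of_lt : ∀ {n k : ℕ}, n < k → stirling1 n k = 0
  | 0, _ + 1, _ => rfl
  | n + 1, k + 1, h => by
    rw [stirling1, stirling1_eq_zero_of_lt (by omega : n < k + 1),
      stirling1_eq_zero_of_lt (by omega : n < k), mul_zero]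

-- The shifted sum has no `k = 0` term because `stirling1 (n + 1) 0 = 0`.
lemma sum_stirling1_succ_mul {R : Type*} [Semiring R] (n p : ℕ) (a : ℕ → R) :
    ∑ k ∈ range (p + 1), (stirling1 (n + 1 + 1) (k + 1) : R) * a (p - k) =
      (n + 1) * ∑ k ∈ range (p + 1), (stirling1 (n + 1) (k + 1) : R) * a (p - k) +
        ∑ k ∈ range p, (stirling1 (n + 1) (k + 1) : R) * a (p - (k + 1)) := by
  have shift : ∑ k ∈ range (p + 1), (stirling1 (n + 1) k : R) * a (p - k) =
      ∑ k ∈ range p, (stirling1 (n + 1) (k + 1) : R) * a (p - (k + 1)) := by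
    rw [sum_range_succ']
    simp [stirling1]
  rw [← shift, mul_sum, ← sum_add_distrib]
  refine sum_congr rfl fun k _ => ?_
  rw [stirling1]
  push_cast
  rw [add_mul, mul_assoc]

lemma iteratedDeriv_eqOn_of_hasDerivAt {𝕜 F : Type*} [NontriviallyNormedField 𝕜]
    [NormedAddCommGroup F] [NormedSpace 𝕜 F] {U : Set 𝕜} (hU : IsOpen U) {f : 𝕜 → F}
    {g : ℕ → 𝕜 → F} (hf : Set.EqOn f (g 0) U)
    (hg : ∀ n, ∀ x ∈ U, HasDerivAt (g n) (g (n + 1) x) x) (n : ℕ) :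
    Set.EqOn (iteratedDeriv n f) (g n) U := by
  induction n with
  | zero => simpa using hf
  | succ n ih =>
    intro x hx
    rw [iteratedDeriv_succ, (ih.eventuallyEq_of_mem (hU.mem_nhds hx)).deriv_eq,
      (hg n x hx).deriv]

noncomputable def logPowDivFactorial (m : ℕ) (x : ℝ) : ℝ :=
  (-Real.log (1 - x)) ^ m / m.factorial

lemma hasDerivAt_logPowDivFactorial_succ (m : ℕ) {x : ℝ} (hx : x < 1) :
    HasDerivAt (logPowDivFactorial (m + 1)) (logPowDivFactorial m x / (1 - x)) x := by
  have hne : 1 - x ≠ 0 := by linarith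
  have hlog : HasDerivAt (fun y => -Real.log (1 - y)) (1 - x)⁻¹ x := by
    have := (((hasDerivAt_id x).const_sub 1).log hne).fun_neg
    rwa [neg_div, neg_neg, one_div] at this
  refine ((hlog.fun_pow (m + 1)).div_const ((m + 1).factorial : ℝ)).congr_deriv ?_
  rw [logPowDivFactorial, Nat.factorial_succ, Nat.add_sub_cancel]
  field_simp
  push_cast
  ring

noncomputable def stirlingLogSum (p n : ℕ) (x : ℝ) : ℝ :=
  ∑ k ∈ range (p + 1), (stirling1 (n + 1) (k + 1) : ℝ) * logPowDivFactorial (p - k) x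

lemma hasDerivAt_stirlingLogSum (p n : ℕ) {x : ℝ} (hx : x < 1) :
    HasDerivAt (stirlingLogSum p n)
      ((∑ k ∈ range p, (stirling1 (n + 1) (k + 1) : ℝ) * logPowDivFactorial (p - (k + 1)) x) /
        (1 - x)) x := by
  have hsplit : stirlingLogSum p n = fun y =>
      ∑ k ∈ range p, (stirling1 (n + 1) (k + 1) : ℝ) * logPowDivFactorial (p - k) y +
        stirling1 (n + 1) (p + 1) := by
    funext y
    simp [stirlingLogSum, sum_range_succ, logPowDivFactorial]
  rw [hsplit, sum_div]
  refine (HasDerivAt.fun_sum fun k hk => ?_).add_const _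
  obtain ⟨m, hm, hm'⟩ : ∃ m, p - k = m + 1 ∧ p - (k + 1) = m :=
    ⟨p - (k + 1), by grind, rfl⟩
  rw [hm, hm', mul_div_assoc]
  exact (hasDerivAt_logPowDivFactorial_succ m hx).const_mul _

lemma hasDerivAt_stirlingLogSum_div (p n : ℕ) {x : ℝ} (hx : x < 1) :
    HasDerivAt (fun y => stirlingLogSum p n y / (1 - y) ^ (n + 1))
      (stirlingLogSum p (n + 1) x / (1 - x) ^ (n + 2)) x := by
  have hne : 1 - x ≠ 0 := by linarith
  have hden := ((hasDerivAt_id x).const_sub 1).fun_pow (n + 1)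
  refine ((hasDerivAt_stirlingLogSum p n hx).div hden (pow_ne_zero _ hne)).congr_deriv ?_
  simp only [stirlingLogSum, id]
  rw [sum_stirling1_succ_mul n p (logPowDivFactorial · x)]
  field_simp
  push_cast
  ring

lemma stirlingLogSum_zero (p : ℕ) (x : ℝ) : stirlingLogSum p 0 x = logPowDivFactorial p x := by
  simp [stirlingLogSum, sum_range_succ', stirling1]

lemma sum_Icc_stirling1_eq_stirlingLogSum_div (p j : ℕ) (z : ℝ) :
    ∑ i ∈ Icc (j - p) j,
        (stirling1 (j + 1) (j + 1 - i) : ℝ) *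
          ((-1 : ℝ) ^ (p + j - i) / (1 - z) ^ (j + 1)) *
            Real.log (1 - z) ^ (p + i - j) / ((p + i - j).factorial : ℝ) =
      stirlingLogSum p j z / (1 - z) ^ (j + 1) := by
  rw [stirlingLogSum, sum_div, ← sum_filter_of_ne (s := range (p + 1)) (p := (· ≤ j))]
  · refine sum_nbij' (j - ·) (j - ·) ?_ ?_ ?_ ?_ fun i hi => ?_
    iterate 4 (intro i hi; simp only [mem_Icc, mem_filter, mem_range] at hi ⊢; omega)
    simp only [mem_Icc] at hi
    obtain ⟨k, hkj, hkp, rfl⟩ : ∃ k ≤ j, k ≤ p ∧ i = j - k :=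
      ⟨j - i, by omega, by omega, by omega⟩
    have hsign : (-1 : ℝ) ^ (p + k) = (-1) ^ (p - k) := by
      rw [show p + k = p - k + 2 * k by omega, pow_add, pow_mul, neg_one_sq, one_pow, mul_one]
    rw [Nat.sub_sub_self hkj, show j + 1 - (j - k) = k + 1 by omega,
      show p + j - (j - k) = p + k by omega, show p + (j - k) - j = p - k by omega,
      logPowDivFactorial, neg_pow (Real.log _), hsign]
    ring
  · intro k _ hk
    by_contra hkj
    simp [stirling1_eq_zero_of_lt (by omega : j + 1 < k + 1)] at hk

theorem iteratedDeriv_log_pow_over_one_sub (j p : ℕ) (z : ℝ) (hz : z < 1) :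
    iteratedDeriv j
        (fun x : ℝ => (-1 : ℝ) ^ p * Real.log (1 - x) ^ p / ((p.factorial : ℝ) * (1 - x))) z =
      ∑ i ∈ Finset.Icc (j - p) j,
        (stirling1 (j + 1) (j + 1 - i) : ℝ) *
          ((-1 : ℝ) ^ (p + j - i) / (1 - z) ^ (j + 1)) *
            Real.log (1 - z) ^ (p + i - j) / ((p + i - j).factorial : ℝ) := by
  have hbase : Set.EqOn
      (fun x : ℝ => (-1 : ℝ) ^ p * Real.log (1 - x) ^ p / ((p.factorial : ℝ) * (1 - x)))
      (fun x => stirlingLogSum p 0 x / (1 - x) ^ (0 + 1)) (Set.Iio 1) := by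
    intro x _
    dsimp only
    rw [stirlingLogSum_zero, logPowDivFactorial, neg_pow (Real.log _), zero_add, pow_one, div_div]
  rw [iteratedDeriv_eqOn_of_hasDerivAt (g := fun n x => stirlingLogSum p n x / (1 - x) ^ (n + 1))
    isOpen_Iio hbase
    (fun n _ hx => hasDerivAt_stirlingLogSum_div p n hx) j hz,
    sum_Icc_stirling1_eq_stirlingLogSum_div]
end

section
/- For all real numbers x and t, ∑_{n=0}^∞ (∑_{k=0}^{n} S(n,k) · x^k) · t^n/n! = exp(x·(e^t - 1)), where the series on the left converges for all real x and t. -/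
/-!
Expand `exp (x * (e^t - 1)) = ∑ₖ xᵏ (e^t - 1)ᵏ / k!` and, by the binomial theorem,
`(e^t - 1)ᵏ = ∑ⱼ (-1)^(j+k) C(k,j) e^(jt)`. The coefficient of `xᵏ tⁿ / n!` is then
`∑ⱼ (-1)^(j+k) C(k,j) jⁿ / k!`, which is `S(n,k)` by the explicit formula for Stirling numbers,
proved from the recurrence. The double series over `(n, k)` converges absolutely (its absolute
values form the same series at `|x|, |t|`), so it can also be summed row by row in `n`.
-/

open Finset Nat

theorem stirling2_eq_stirlingSecond : stirling2 = stirlingSecond := by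
  ext n k
  induction n generalizing k with
  | zero => cases k <;> rfl
  | succ n ih => cases k <;> simp [stirling2, stirlingSecond, ih]

theorem factorial_mul_stirlingSecond_eq_sum {R : Type*} [CommRing R] (n k : ℕ) :
    (k ! * stirlingSecond n k : R) =
      ∑ j ∈ range (k + 1), (k.choose j : R) * ((-1) ^ (j + k) * (j : R) ^ n) := by
  induction n generalizing k with
  | zero =>
    cases k with
    | zero => simp
    | succ k => simpa [mul_comm] using sub_pow (1 : R) 1 (k + 1)
  | succ n ih =>
    cases k with
    | zero => simp
    | succ k =>
      -- Pascal's rule and `(k+1) C(k,i) = (i+1) C(k+1,i+1)` express both sides through `u`.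
      set u := ∑ i ∈ range (k + 1), (k.choose i : R) * ((-1) ^ (i + k) * ((i : R) + 1) ^ n)
      have h_pascal :
          ∑ j ∈ range (k + 2), ((k + 1).choose j : R) * ((-1) ^ (j + (k + 1)) * (j : R) ^ n) =
            -∑ j ∈ range (k + 1), (k.choose j : R) * ((-1) ^ (j + k) * (j : R) ^ n) + u := by
        rw [sum_choose_succ_mul (fun j _ => (-1 : R) ^ (j + (k + 1)) * (j : R) ^ n),
          ← sum_neg_distrib]
        congr 1 <;> refine sum_congr rfl fun i _ => ?_ <;> push_cast <;> ring
      have h_absorb : ∑ j ∈ range (k + 2),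
          ((k + 1).choose j : R) * ((-1) ^ (j + (k + 1)) * (j : R) ^ (n + 1)) = (k + 1) * u := by
        rw [sum_range_succ', mul_sum]
        simp only [Nat.cast_zero, zero_pow n.succ_ne_zero, mul_zero, add_zero]
        refine sum_congr rfl fun i _ => ?_
        have := congrArg (Nat.cast (R := R)) (add_one_mul_choose_eq k i)
        push_cast at this ⊢
        linear_combination -((-1) ^ (i + k) * ((i : R) + 1) ^ n) * this
      have ih₁ := ih (k + 1)
      have ih₀ := ih k
      rw [h_absorb, stirlingSecond_succ_succ]
      push_cast [factorial_succ] at ih₁ ⊢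
      linear_combination (k + 1 : R) * (ih₁ + ih₀ + h_pascal)

theorem Real.hasSum_pow_div_factorial (x : ℝ) : HasSum (fun n => x ^ n / n !) (Real.exp x) := by
  rw [Real.exp_eq_exp_ℝ]
  exact NormedSpace.expSeries_div_hasSum_exp x

theorem hasSum_stirlingSecond_mul_pow_div_factorial (k : ℕ) (t : ℝ) :
    HasSum (fun n => (stirlingSecond n k : ℝ) * t ^ n / n !) ((Real.exp t - 1) ^ k / k !) := by
  have h_sum := (hasSum_sum fun j (_ : j ∈ range (k + 1)) =>
    (Real.hasSum_pow_div_factorial (j * t)).mul_left ((k.choose j : ℝ) * (-1) ^ (j + k)))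
  have h_value : (Real.exp t - 1) ^ k =
      ∑ j ∈ range (k + 1), (k.choose j : ℝ) * (-1) ^ (j + k) * Real.exp (j * t) := by
    rw [sub_pow]
    refine sum_congr rfl fun j _ => ?_
    rw [Real.exp_nat_mul]
    ring
  rw [h_value]
  refine (h_sum.div_const (k ! : ℝ)).congr_fun fun n => ?_
  have h_term : ∑ j ∈ range (k + 1), (k.choose j : ℝ) * (-1) ^ (j + k) * ((j * t) ^ n / n !) =
      (k ! * stirlingSecond n k : ℝ) * t ^ n / n ! := by
    rw [factorial_mul_stirlingSecond_eq_sum, sum_mul, sum_div]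
    exact sum_congr rfl fun j _ => by ring
  rw [h_term]
  field_simp

noncomputable def bellTerm (x t : ℝ) (p : ℕ × ℕ) : ℝ :=
  stirlingSecond p.1 p.2 * x ^ p.2 * t ^ p.1 / p.1 !

theorem hasSum_bellTerm_column (x t : ℝ) (k : ℕ) :
    HasSum (fun n => bellTerm x t (n, k)) ((x * (Real.exp t - 1)) ^ k / k !) := by
  rw [mul_pow, mul_div_assoc]
  exact ((hasSum_stirlingSecond_mul_pow_div_factorial k t).mul_left (x ^ k)).congr_fun
    fun n => by rw [bellTerm]; ring

theorem summable_bellTerm (x t : ℝ) : Summable (bellTerm x t) := by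
  have h_abs (p : ℕ × ℕ) : |bellTerm x t p| = bellTerm |x| |t| p := by
    simp [bellTerm, abs_div, abs_mul]
  refine .of_abs ?_
  simp only [h_abs]
  refine (Equiv.prodComm ℕ ℕ).summable_iff.1
    ((summable_prod_of_nonneg fun p => ?_).2 ⟨fun k => ?_, ?_⟩)
  · simp only [Function.comp_apply, bellTerm]
    positivity
  · exact (hasSum_bellTerm_column |x| |t| k).summable
  · simp only [Function.comp_apply, Equiv.prodComm_apply, Prod.swap_prod_mk,
      fun k => (hasSum_bellTerm_column |x| |t| k).tsum_eq]
    exact Real.summable_pow_div_factorial _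

theorem hasSum_bellTerm (x t : ℝ) : HasSum (bellTerm x t) (Real.exp (x * (Real.exp t - 1))) := by
  have h_swap := (summable_bellTerm x t).prod_symm.hasSum
  have h_cols := h_swap.prod_fiberwise (hasSum_bellTerm_column x t)
  rw [h_cols.unique (Real.hasSum_pow_div_factorial _)] at h_swap
  exact (Equiv.prodComm ℕ ℕ).hasSum_iff.1 h_swap

theorem bell_polynomial_egf (x t : ℝ) :
    HasSum (fun n : ℕ =>
        (∑ k ∈ Finset.range (n + 1), (stirling2 n k : ℝ) * x ^ k) * t ^ n / (n.factorial : ℝ))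
      (Real.exp (x * (Real.exp t - 1))) := by
  refine (hasSum_bellTerm x t).prod_fiberwise fun n => ?_
  rw [stirling2_eq_stirlingSecond, sum_mul, sum_div]
  refine hasSum_sum_of_ne_finset_zero fun k hk => ?_
  rw [bellTerm, stirlingSecond_eq_zero_of_lt (by simpa using hk)]
  simp
end
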